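/- Behaviour of the LCA under union: assume (a, b) is an effective union for uf (both in Field (ufa_α uf) with distinct representatives), x, y < |uf|, and x and y have equal representatives in ufa_union uf a b. Then ufa_lca (ufa_union uf a b) x y equals ufa_lca uf x y if rep_of uf x = rep_of uf y, and equals rep_of uf b otherwise. -/

import Mathlib

/-- Proof terms for equalities. -/
inductive EqPrf (α : Type*) where
  | assm (i : ℕ)
  | refl (x : α)
  | sym (p : EqPrf α)
  | trans (p₁ p₂ : EqPrf α)

/-- The judgment `us ⊢ p : (x, y)`. -/
inductive Proves {α : Type*} (us : List (α × α)) : EqPrf α → α × α → Prop where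
  | assm (i : ℕ) (x y : α) (hi : i < us.length) (h : us.get ⟨i, hi⟩ = (x, y)) :
      Proves us (.assm i) (x, y)
  | refl (x : α) : Proves us (.refl x) (x, x)
  | sym (p : EqPrf α) (x y : α) : Proves us p (x, y) → Proves us (.sym p) (y, x)
  | trans (p₁ p₂ : EqPrf α) (x y z : α) :
      Proves us p₁ (x, y) → Proves us p₂ (y, z) → Proves us (.trans p₁ p₂) (x, z)

/-- Symmetric closure of a relation given as a set of pairs. -/
def symcl {α : Type*} (r : Set (α × α)) : Set (α × α) := r ∪ {p | (p.2, p.1) ∈ r}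

/-- Equivalence closure: reflexive transitive closure of the symmetric closure. -/
def equivcl {α : Type*} (r : Set (α × α)) : Set (α × α) :=
  {p | Relation.ReflTransGen (fun a b => (a, b) ∈ symcl r) p.1 p.2}

/-- Parent pointer of element `i` in the union-find list `l`. -/
def parentOf (l : List ℕ) (i : ℕ) : ℕ := l.getD i 0

/-- Domain (termination) predicate of the representative function. -/
inductive RepOfDom (l : List ℕ) : ℕ → Prop where
  | base (i : ℕ) (h : parentOf l i = i) : RepOfDom l i
  | step (i : ℕ) (h : parentOf l i ≠ i) (ih : RepOfDom l (parentOf l i)) : RepOfDom l i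

/-- Fuelled iteration of parent pointers. -/
def repOfAux (l : List ℕ) : ℕ → ℕ → ℕ
  | 0, i => i
  | n + 1, i => if parentOf l i = i then i else repOfAux l n (parentOf l i)

/-- Representative of `i`: follow parent pointers to a self-loop
(the fuel `l.length` suffices on well-formed structures). -/
def repOf (l : List ℕ) (i : ℕ) : ℕ := repOfAux l l.length i

/-- Union-find invariant. -/
def ufaInvar (l : List ℕ) : Prop := ∀ i < l.length, RepOfDom l i ∧ parentOf l i < l.length

/-- Abstraction: the partial equivalence relation represented by `l`. -/
def ufaα (l : List ℕ) : Set (ℕ × ℕ) :=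
  {p | p.1 < l.length ∧ p.2 < l.length ∧ repOf l p.1 = repOf l p.2}

/-- Union operation. -/
def ufaUnion (l : List ℕ) (x y : ℕ) : List ℕ := l.set (repOf l x) (repOf l y)

/-- Apply a list of unions. -/
def ufaUnions (l : List ℕ) (us : List (ℕ × ℕ)) : List ℕ :=
  us.foldl (fun l p => ufaUnion l p.1 p.2) l

/-- Initial union-find structure on `n` elements. -/
def ufaInit (n : ℕ) : List ℕ := List.range n

/-- Field of a relation given as a set of pairs. -/
def relField (r : Set (ℕ × ℕ)) : Set ℕ := {x | (∃ y, (x, y) ∈ r) ∨ ∃ y, (y, x) ∈ r}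

/-- Merging the equivalence classes of `x` and `y` in a partial equivalence relation. -/
def perUnion (R : Set (ℕ × ℕ)) (x y : ℕ) : Set (ℕ × ℕ) :=
  R ∪ {p | (p.1, x) ∈ R ∧ (y, p.2) ∈ R} ∪ {p | (p.1, y) ∈ R ∧ (x, p.2) ∈ R}

/-- Effective union. -/
def effUnion (l : List ℕ) (a b : ℕ) : Prop :=
  a ∈ relField (ufaα l) ∧ b ∈ relField (ufaα l) ∧ repOf l a ≠ repOf l b

/-- Effective list of unions. -/
def effUnions : List ℕ → List (ℕ × ℕ) → Prop
  | _, [] => True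
  | l, (a, b) :: us => effUnion l a b ∧ effUnions (ufaUnion l a b) us

/-- Arc of the union-find forest: from the parent of `c` to `c`, for non-roots `c`. -/
def ufaArc (l : List ℕ) (p c : ℕ) : Prop :=
  c < l.length ∧ parentOf l c = p ∧ p ≠ c

/-- `vs` is the vertex list of a directed walk from `x` to `y` in the forest of `l`. -/
def IsPathVerts (l : List ℕ) (x y : ℕ) (vs : List ℕ) : Prop :=
  vs.head? = some x ∧ vs.getLast? = some y ∧ List.Chain' (ufaArc l) vs

/-- Fuelled computation of the vertices on the path from the representative to `x`. -/
def awalkVertsAux (l : List ℕ) : ℕ → ℕ → List ℕ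
  | 0, x => [x]
  | n + 1, x => if parentOf l x = x then [x] else awalkVertsAux l n (parentOf l x) ++ [x]

/-- The vertices on the path from `repOf l x` to `x`. -/
def awalkVertsFromRep (l : List ℕ) (x : ℕ) : List ℕ := awalkVertsAux l l.length x

/-- Longest common prefix of two lists. -/
def longestCommonPrefix : List ℕ → List ℕ → List ℕ
  | a :: as, b :: bs => if a = b then a :: longestCommonPrefix as bs else []
  | _, _ => []

/-- Lowest common ancestor computation. -/
def ufaLca (l : List ℕ) (x y : ℕ) : ℕ :=
  (longestCommonPrefix (awalkVertsFromRep l x) (awalkVertsFromRep l y)).getLastD 0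

/-- Associated union of an element in the state `(uf, us)`:
the index of the union that set its parent pointer. -/
def auDs (uf : List ℕ) (us : List (ℕ × ℕ)) (z : ℕ) : Option ℕ :=
  if h : us = [] then none
  else
    if z = repOf (ufaUnions uf us.dropLast) (us.getLast h).1 then some us.dropLast.length
    else auDs uf us.dropLast z
termination_by us.length
decreasing_by
  simp only [List.length_dropLast]
  have : us ≠ [] := h
  have : 0 < us.length := by cases us <;> simp_all
  omega

/-- Max on `Option ℕ` with `none` least. -/
def omax : Option ℕ → Option ℕ → Option ℕ
  | none, b => b
  | some i, none => some i
  | some i, some j => some (max i j)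

/-- Order on `Option ℕ` with `none` least. -/
def ole : Option ℕ → Option ℕ → Prop
  | none, _ => True
  | some _, none => False
  | some i, some j => i ≤ j

/-- Fuelled search for the newest associated union on the path from `d` up to `a`. -/
def findNewestAux (l : List ℕ) (au : ℕ → Option ℕ) : ℕ → ℕ → ℕ → Option ℕ
  | 0, _, _ => none
  | n + 1, a, d => if a = d then none else omax (au d) (findNewestAux l au n a (parentOf l d))

/-- Newest associated union on the path from ancestor `a` down to `d`
in the state `(uf, us)`. -/
def findNewestOnPath (uf : List ℕ) (us : List (ℕ × ℕ)) (a d : ℕ) : Option ℕ :=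
  findNewestAux (ufaUnions uf us) (auDs uf us) (ufaUnions uf us).length a d

/-- The naive explain operation, recursing by rolling back the last union. -/
def explain (uf : List ℕ) (us : List (ℕ × ℕ)) (x y : ℕ) : EqPrf ℕ :=
  if h : us = [] then .refl x
  else
    if repOf (ufaUnions uf us.dropLast) x = repOf (ufaUnions uf us.dropLast) y then
      explain uf us.dropLast x y
    else if repOf (ufaUnions uf us.dropLast) x =
        repOf (ufaUnions uf us.dropLast) (us.getLast h).1 then
      .trans (.trans (explain uf us.dropLast x (us.getLast h).1) (.assm us.dropLast.length))
        (explain uf us.dropLast (us.getLast h).2 y)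
    else
      .trans (.trans (explain uf us.dropLast x (us.getLast h).2)
          (.sym (.assm us.dropLast.length)))
        (explain uf us.dropLast (us.getLast h).1 y)
termination_by us.length
decreasing_by
  all_goals
    simp only [List.length_dropLast]
    have : us ≠ [] := h
    have : 0 < us.length := by cases us <;> simp_all
    omega

/-- Newest union on the path from the lca to `x`. -/
def newestX (uf : List ℕ) (us : List (ℕ × ℕ)) (x y : ℕ) : Option ℕ :=
  findNewestOnPath uf us (ufaLca (ufaUnions uf us) x y) x

/-- Newest union on the path from the lca to `y`. -/
def newestY (uf : List ℕ) (us : List (ℕ × ℕ)) (x y : ℕ) : Option ℕ :=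
  findNewestOnPath uf us (ufaLca (ufaUnions uf us) x y) y

/-- The union recorded at a given (optional) index. -/
def unionAt (us : List (ℕ × ℕ)) (n : Option ℕ) : ℕ × ℕ := us.getD (n.getD 0) (0, 0)

/-- Domain (termination) predicate of the efficient explain operation. -/
inductive Explain'Dom (uf : List ℕ) (us : List (ℕ × ℕ)) : ℕ → ℕ → Prop where
  | refl (x : ℕ) : Explain'Dom uf us x x
  | newest_x (x y : ℕ) (hne : x ≠ y)
      (hle : ole (newestY uf us x y) (newestX uf us x y))
      (h1 : Explain'Dom uf us x (unionAt us (newestX uf us x y)).1)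
      (h2 : Explain'Dom uf us (unionAt us (newestX uf us x y)).2 y) :
      Explain'Dom uf us x y
  | newest_y (x y : ℕ) (hne : x ≠ y)
      (hgt : ¬ ole (newestY uf us x y) (newestX uf us x y))
      (h1 : Explain'Dom uf us x (unionAt us (newestY uf us x y)).2)
      (h2 : Explain'Dom uf us (unionAt us (newestY uf us x y)).1 y) :
      Explain'Dom uf us x y

/-- Recursion graph of the efficient explain operation `explain'`. -/
inductive Explain'G (uf : List ℕ) (us : List (ℕ × ℕ)) : ℕ → ℕ → EqPrf ℕ → Prop where
  | refl (x : ℕ) : Explain'G uf us x x (.refl x)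
  | newest_x (x y : ℕ) (px py : EqPrf ℕ) (hne : x ≠ y)
      (hle : ole (newestY uf us x y) (newestX uf us x y))
      (h1 : Explain'G uf us x (unionAt us (newestX uf us x y)).1 px)
      (h2 : Explain'G uf us (unionAt us (newestX uf us x y)).2 y py) :
      Explain'G uf us x y
        (.trans (.trans px (.assm ((newestX uf us x y).getD 0))) py)
  | newest_y (x y : ℕ) (px py : EqPrf ℕ) (hne : x ≠ y)
      (hgt : ¬ ole (newestY uf us x y) (newestX uf us x y))
      (h1 : Explain'G uf us x (unionAt us (newestY uf us x y)).2 px)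
      (h2 : Explain'G uf us (unionAt us (newestY uf us x y)).1 y py) :
      Explain'G uf us x y
        (.trans (.trans px (.sym (.assm ((newestY uf us x y).getD 0)))) py)

section Lemmas
variable {l : List ℕ}

lemma awalk_ne_nil (n x : ℕ) : awalkVertsAux l n x ≠ [] := by
  induction n generalizing x with
  | zero => simp [awalkVertsAux]
  | succ n ih =>
    simp only [awalkVertsAux]
    split <;> simp

lemma repOfAux_root {x : ℕ} (hx : parentOf l x = x) (n : ℕ) : repOfAux l n x = x := by
  cases n <;> simp [repOfAux, hx]

lemma awalk_root {x : ℕ} (hx : parentOf l x = x) (n : ℕ) : awalkVertsAux l n x = [x] := by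
  cases n <;> simp [awalkVertsAux, hx]

lemma repOfAux_spec : ∀ (k x n : ℕ), parentOf l ((parentOf l)^[k] x) = (parentOf l)^[k] x →
    k ≤ n → ∃ j ≤ k, repOfAux l n x = (parentOf l)^[j] x ∧
      parentOf l (repOfAux l n x) = repOfAux l n x := by
  intro k
  induction k with
  | zero =>
    intro x n hr _
    simp only [Function.iterate_zero, id] at hr
    exact ⟨0, le_refl _, by simp [repOfAux_root hr], by simp [repOfAux_root hr, hr]⟩
  | succ k ih =>
    intro x n hr hn
    by_cases hx : parentOf l x = x
    · exact ⟨0, Nat.zero_le _, by simp [repOfAux_root hx], by simp [repOfAux_root hx, hx]⟩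
    · obtain ⟨n', rfl⟩ : ∃ n', n = n' + 1 := ⟨n - 1, by omega⟩
      rw [Function.iterate_succ_apply] at hr
      obtain ⟨j, hj, h1, h2⟩ := ih (parentOf l x) n' hr (by omega)
      refine ⟨j + 1, by omega, ?_, ?_⟩
      · rw [repOfAux, if_neg hx, h1, Function.iterate_succ_apply]
      · rw [repOfAux, if_neg hx]; exact h2

lemma repOfAux_stable : ∀ (k x n m : ℕ), parentOf l ((parentOf l)^[k] x) = (parentOf l)^[k] x →
    k ≤ n → k ≤ m → repOfAux l n x = repOfAux l m x := by
  intro k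
  induction k with
  | zero =>
    intro x n m hr _ _
    simp only [Function.iterate_zero, id] at hr
    rw [repOfAux_root hr, repOfAux_root hr]
  | succ k ih =>
    intro x n m hr hn hm
    by_cases hx : parentOf l x = x
    · rw [repOfAux_root hx, repOfAux_root hx]
    · obtain ⟨n', rfl⟩ : ∃ n', n = n' + 1 := ⟨n - 1, by omega⟩
      obtain ⟨m', rfl⟩ : ∃ m', m = m' + 1 := ⟨m - 1, by omega⟩
      rw [Function.iterate_succ_apply] at hr
      rw [repOfAux, if_neg hx, repOfAux, if_neg hx]
      exact ih _ _ _ hr (by omega) (by omega)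

lemma awalk_stable : ∀ (k x n m : ℕ), parentOf l ((parentOf l)^[k] x) = (parentOf l)^[k] x →
    k ≤ n → k ≤ m → awalkVertsAux l n x = awalkVertsAux l m x := by
  intro k
  induction k with
  | zero =>
    intro x n m hr _ _
    simp only [Function.iterate_zero, id] at hr
    rw [awalk_root hr, awalk_root hr]
  | succ k ih =>
    intro x n m hr hn hm
    by_cases hx : parentOf l x = x
    · rw [awalk_root hx, awalk_root hx]
    · obtain ⟨n', rfl⟩ : ∃ n', n = n' + 1 := ⟨n - 1, by omega⟩
      obtain ⟨m', rfl⟩ : ∃ m', m = m' + 1 := ⟨m - 1, by omega⟩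
      rw [Function.iterate_succ_apply] at hr
      simp only [awalkVertsAux, if_neg hx]
      exact congrArg (· ++ [x]) (ih _ _ _ hr (by omega) (by omega))

lemma iterate_lt (h : ufaInvar l) {x : ℕ} (hx : x < l.length) (j : ℕ) :
    (parentOf l)^[j] x < l.length := by
  induction j with
  | zero => simpa
  | succ j ih => rw [Function.iterate_succ_apply']; exact (h _ ih).2

lemma dom_parent {x : ℕ} (hd : RepOfDom l x) : RepOfDom l (parentOf l x) := by
  cases hd with
  | base _ hi => rw [hi]; exact .base x hi
  | step _ hi ih => exact ih

lemma cycle_root {y : ℕ} (hd : RepOfDom l y) : ∀ m, 0 < m → (parentOf l)^[m] y = y →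
    parentOf l y = y := by
  induction hd with
  | base i hi =>
    intro _ _ _
    exact hi
  | step i hi hd ih =>
    intro m hm hc
    exfalso
    have hc' : (parentOf l)^[m] (parentOf l i) = parentOf l i := by
      rw [← Function.iterate_succ_apply, Function.iterate_succ_apply', hc]
    have hroot : parentOf l (parentOf l i) = parentOf l i := ih m hm hc'
    have : ∀ j, (parentOf l)^[j] (parentOf l i) = parentOf l i := by
      intro j; induction j with
      | zero => rfl
      | succ j ihj => rw [Function.iterate_succ_apply', ihj, hroot]
    obtain ⟨m', rfl⟩ : ∃ m', m = m' + 1 := ⟨m - 1, by omega⟩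
    rw [Function.iterate_succ_apply, this m'] at hc
    exact hi hc

lemma dom_iterate (h : ufaInvar l) {x : ℕ} (hx : x < l.length) (j : ℕ) :
    RepOfDom l ((parentOf l)^[j] x) := by
  induction j with
  | zero => exact (h x hx).1
  | succ n ihn => rw [Function.iterate_succ_apply']; exact dom_parent ihn

lemma exists_root (h : ufaInvar l) {x : ℕ} (hx : x < l.length) :
    ∃ k < l.length, parentOf l ((parentOf l)^[k] x) = (parentOf l)^[k] x := by
  have key : ∀ j k : ℕ, j < k → (parentOf l)^[j] x = (parentOf l)^[k] x → k ≤ l.length →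
      ∃ k < l.length, parentOf l ((parentOf l)^[k] x) = (parentOf l)^[k] x := by
    intro j k hlt hjk hkL
    have hcyc : (parentOf l)^[k - j] ((parentOf l)^[j] x) = (parentOf l)^[j] x := by
      rw [← Function.iterate_add_apply, show k - j + j = k by omega]
      exact hjk.symm
    exact ⟨j, by omega, cycle_root (dom_iterate h hx j) (k - j) (by omega) hcyc⟩
  have hni : ¬ Function.Injective (fun j : Fin (l.length + 1) =>
      (⟨(parentOf l)^[j.1] x, iterate_lt h hx j.1⟩ : Fin l.length)) := by
    intro hinj
    have := Fintype.card_le_of_injective _ hinj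
    simp at this
  rw [Function.not_injective_iff] at hni
  obtain ⟨j, k, hjk, hne⟩ := hni
  simp only [Fin.mk.injEq] at hjk
  rcases Nat.lt_or_ge j.1 k.1 with hlt | hge
  · exact key j.1 k.1 hlt hjk (by omega)
  · have hlt : k.1 < j.1 := by
      rcases Nat.lt_or_ge k.1 j.1 with h' | h'
      · exact h'
      · exact absurd (Fin.ext (by omega)) hne
    exact key k.1 j.1 hlt hjk.symm (by omega)

lemma repOf_eq_iterate_min {x k : ℕ}
    (hr : parentOf l ((parentOf l)^[k] x) = (parentOf l)^[k] x)
    (hmin : ∀ j < k, parentOf l ((parentOf l)^[j] x) ≠ (parentOf l)^[j] x)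
    (hk : k ≤ l.length) : repOf l x = (parentOf l)^[k] x := by
  obtain ⟨j, hj, h1, h2⟩ := repOfAux_spec k x l.length hr hk
  rcases Nat.lt_or_ge j k with hlt | hge
  · exact absurd (h1 ▸ h2) (hmin j hlt)
  · have : j = k := by omega
    rw [repOf, h1, this]

lemma repOf_spec (h : ufaInvar l) {x : ℕ} (hx : x < l.length) :
    ∃ j < l.length, repOf l x = (parentOf l)^[j] x ∧
      parentOf l (repOf l x) = repOf l x := by
  obtain ⟨k, hk, hr⟩ := exists_root h hx
  obtain ⟨j, hj, h1, h2⟩ := repOfAux_spec k x l.length hr (by omega)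
  exact ⟨j, by omega, h1, h2⟩

lemma repOf_isRoot (h : ufaInvar l) {x : ℕ} (hx : x < l.length) :
    parentOf l (repOf l x) = repOf l x := (repOf_spec h hx).choose_spec.2.2

lemma repOf_lt (h : ufaInvar l) {x : ℕ} (hx : x < l.length) : repOf l x < l.length := by
  obtain ⟨j, _, h1, _⟩ := repOf_spec h hx
  rw [h1]; exact iterate_lt h hx j

lemma repOf_root_self {x : ℕ} (hx : parentOf l x = x) : repOf l x = x :=
  repOfAux_root hx _

lemma rep_parent (h : ufaInvar l) {x : ℕ} (hx : x < l.length) (hnr : parentOf l x ≠ x) :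
    repOf l (parentOf l x) = repOf l x := by
  obtain ⟨k, hk, hr⟩ := exists_root h hx
  have hk1 : 1 ≤ k := by
    rcases Nat.eq_zero_or_pos k with rfl | h'
    · simp only [Function.iterate_zero, id] at hr; exact absurd hr hnr
    · exact h'
  have hL : 1 ≤ l.length := by omega
  obtain ⟨k', rfl⟩ : ∃ k', k = k' + 1 := ⟨k - 1, by omega⟩
  obtain ⟨L', hL'⟩ : ∃ L', l.length = L' + 1 := ⟨l.length - 1, by omega⟩
  have hr' : parentOf l ((parentOf l)^[k'] (parentOf l x)) = (parentOf l)^[k'] (parentOf l x) := by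
    rw [← Function.iterate_succ_apply]; exact hr
  have e1 : repOf l x = repOfAux l L' (parentOf l x) := by
    rw [repOf, hL', repOfAux, if_neg hnr]
  rw [e1, repOf, hL']
  exact repOfAux_stable k' _ _ _ hr' (by omega) (by omega)

lemma rep_iterate (h : ufaInvar l) {x : ℕ} (hx : x < l.length) (j : ℕ) :
    repOf l ((parentOf l)^[j] x) = repOf l x := by
  induction j with
  | zero => rfl
  | succ j ihj =>
    rw [Function.iterate_succ_apply']
    by_cases hr : parentOf l ((parentOf l)^[j] x) = (parentOf l)^[j] x
    · rw [hr, ihj]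
    · rw [rep_parent h (iterate_lt h hx j) hr, ihj]

lemma awalk_head (n x : ℕ) : (awalkVertsAux l n x).head? = some (repOfAux l n x) := by
  induction n generalizing x with
  | zero => simp [awalkVertsAux, repOfAux]
  | succ n ih =>
    simp only [awalkVertsAux, repOfAux]
    split
    · simp
    · rw [List.head?_append_of_ne_nil _ (awalk_ne_nil n _)]
      exact ih _

lemma awalk_mem {n x z : ℕ} (hz : z ∈ awalkVertsAux l n x) : ∃ j, z = (parentOf l)^[j] x := by
  induction n generalizing x with
  | zero =>
    simp only [awalkVertsAux, List.mem_singleton] at hz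
    exact ⟨0, hz⟩
  | succ n ih =>
    simp only [awalkVertsAux] at hz
    split at hz
    · simp at hz; exact ⟨0, hz⟩
    · rw [List.mem_append] at hz
      rcases hz with hz | hz
      · obtain ⟨j, hj⟩ := ih hz
        exact ⟨j + 1, by rw [hj, Function.iterate_succ_apply]⟩
      · simp at hz; exact ⟨0, hz⟩

lemma parentOf_set {i v : ℕ} (hi : i < l.length) (z : ℕ) :
    parentOf (l.set i v) z = if z = i then v else parentOf l z := by
  unfold parentOf
  rcases eq_or_ne z i with rfl | hz
  · simp [List.getD, List.getElem?_set_eq_of_lt _ hi]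
  · simp [List.getD, List.getElem?_set_ne (Ne.symm hz), hz]

lemma repOf_union (h : ufaInvar l) {ra rb x : ℕ} (hra : ra < l.length)
    (hroot_a : parentOf l ra = ra) (hroot_b : parentOf l rb = rb) (hab : ra ≠ rb)
    (hx : x < l.length) :
    repOf (l.set ra rb) x = if repOf l x = ra then rb else repOf l x := by
  set L' := l.set ra rb with hL'
  have hlen : L'.length = l.length := by simp [hL']
  have hp' : ∀ z, parentOf L' z = if z = ra then rb else parentOf l z := parentOf_set hra
  have hex : ∃ k, parentOf l ((parentOf l)^[k] x) = (parentOf l)^[k] x := by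
    obtain ⟨k, _, hk⟩ := exists_root h hx; exact ⟨k, hk⟩
  set k := Nat.find hex with hkdef
  have hkspec := Nat.find_spec hex
  have hkmin : ∀ j < k, parentOf l ((parentOf l)^[j] x) ≠ (parentOf l)^[j] x :=
    fun j hj => Nat.find_min hex hj
  have hkL : k < l.length := by
    obtain ⟨k0, hk0, hk0r⟩ := exists_root h hx
    have := Nat.find_min' hex hk0r
    omega
  have hrep : repOf l x = (parentOf l)^[k] x :=
    repOf_eq_iterate_min hkspec hkmin (by omega)
  have hagree : ∀ j ≤ k, (parentOf L')^[j] x = (parentOf l)^[j] x := by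
    intro j hj
    induction j with
    | zero => rfl
    | succ j ihj =>
      rw [Function.iterate_succ_apply', Function.iterate_succ_apply',
        ihj (by omega), hp']
      have hne : (parentOf l)^[j] x ≠ ra := by
        intro he
        exact hkmin j (by omega) (by rw [he, hroot_a])
      rw [if_neg hne]
  have hnotroot' : ∀ j < k, parentOf L' ((parentOf L')^[j] x) ≠ (parentOf L')^[j] x := by
    intro j hj
    rw [hagree j (by omega), hp']
    rcases eq_or_ne ((parentOf l)^[j] x) ra with he | he
    · rw [if_pos he, he]; exact Ne.symm hab
    · rw [if_neg he]; exact hkmin j hj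
  by_cases hxa : repOf l x = ra
  · rw [if_pos hxa]
    have e : (parentOf L')^[k + 1] x = rb := by
      rw [Function.iterate_succ_apply', hagree k le_rfl, ← hrep, hxa, hp', if_pos rfl]
    have := repOf_eq_iterate_min (l := L') (x := x) (k := k + 1)
      (by rw [e, hp', if_neg (Ne.symm hab)]; exact hroot_b)
      (by
        intro j hj
        rcases Nat.lt_or_ge j k with hjk | hjk
        · exact hnotroot' j hjk
        · have hjk : j = k := by omega
          rw [hjk, hagree k le_rfl, ← hrep, hxa, hp', if_pos rfl]
          exact Ne.symm hab)
      (by omega)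
    rw [this, e]
  · rw [if_neg hxa]
    have := repOf_eq_iterate_min (l := L') (x := x) (k := k)
      (by
        rw [hagree k le_rfl, hp']
        rw [if_neg (by rw [← hrep]; exact hxa)]
        exact hkspec)
      hnotroot' (by omega)
    rw [this, hagree k le_rfl, hrep]

lemma awalk_union_aux (h : ufaInvar l) {ra rb : ℕ} (hra : ra < l.length)
    (hroot_a : parentOf l ra = ra) (hroot_b : parentOf l rb = rb) (hab : ra ≠ rb) :
    ∀ (k x n : ℕ), x < l.length →
      parentOf l ((parentOf l)^[k] x) = (parentOf l)^[k] x → k + 1 ≤ n →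
      awalkVertsAux (l.set ra rb) n x =
        (if repOf l x = ra then [rb] else []) ++ awalkVertsAux l n x := by
  have hp' : ∀ z, parentOf (l.set ra rb) z = if z = ra then rb else parentOf l z :=
    parentOf_set hra
  have hrootcase : ∀ x n, parentOf l x = x → 1 ≤ n →
      awalkVertsAux (l.set ra rb) n x =
        (if repOf l x = ra then [rb] else []) ++ awalkVertsAux l n x := by
    intro x n hxx hn
    rw [awalk_root hxx, repOf_root_self hxx]
    rcases eq_or_ne x ra with he | hne
    · rw [if_pos he]
      obtain ⟨n', rfl⟩ : ∃ n', n = n' + 1 := ⟨n - 1, by omega⟩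
      have h1 : parentOf (l.set ra rb) x = rb := by rw [hp', if_pos he]
      have h2 : parentOf (l.set ra rb) rb = rb := by
        rw [hp', if_neg (Ne.symm hab)]; exact hroot_b
      have hrbx : rb ≠ x := fun hh => hab (by omega)
      rw [awalkVertsAux, h1, if_neg hrbx, awalk_root h2]
    · rw [if_neg hne]
      have h1 : parentOf (l.set ra rb) x = x := by rw [hp', if_neg hne]; exact hxx
      rw [awalk_root h1]
      rfl
  intro k
  induction k with
  | zero =>
    intro x n hx hr hn
    simp only [Function.iterate_zero, id] at hr
    exact hrootcase x n hr (by omega)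
  | succ k ih =>
    intro x n hx hr hn
    by_cases hxx : parentOf l x = x
    · exact hrootcase x n hxx (by omega)
    · have hxa : x ≠ ra := fun he => hxx (he ▸ hroot_a)
      obtain ⟨n', rfl⟩ : ∃ n', n = n' + 1 := ⟨n - 1, by omega⟩
      have h1 : parentOf (l.set ra rb) x = parentOf l x := by rw [hp', if_neg hxa]
      have hpx : parentOf l x < l.length := (h x hx).2
      have hr' : parentOf l ((parentOf l)^[k] (parentOf l x)) =
          (parentOf l)^[k] (parentOf l x) := by
        rw [← Function.iterate_succ_apply]; exact hr
      have hrw := ih (parentOf l x) n' hpx hr' (by omega)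
      rw [awalkVertsAux, h1, if_neg hxx, hrw, rep_parent h hx hxx]
      rw [awalkVertsAux, if_neg hxx]
      rw [List.append_assoc]

lemma awalk_union (h : ufaInvar l) {ra rb x : ℕ} (hra : ra < l.length)
    (hroot_a : parentOf l ra = ra) (hroot_b : parentOf l rb = rb) (hab : ra ≠ rb)
    (hx : x < l.length) :
    awalkVertsAux (l.set ra rb) (l.set ra rb).length x =
      (if repOf l x = ra then [rb] else []) ++ awalkVertsAux l l.length x := by
  obtain ⟨k, hk, hkr⟩ := exists_root h hx
  have : (l.set ra rb).length = l.length := by simp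
  rw [this]
  exact awalk_union_aux h hra hroot_a hroot_b hab k x l.length hx hkr (by omega)

end Lemmas

section LCP

lemma lcp_cons (a : ℕ) (u v : List ℕ) :
    longestCommonPrefix (a :: u) (a :: v) = a :: longestCommonPrefix u v := by
  simp [longestCommonPrefix]

lemma lcp_cons_ne {a b : ℕ} (h : a ≠ b) (u v : List ℕ) :
    longestCommonPrefix (a :: u) (b :: v) = [] := by
  simp [longestCommonPrefix, h]

lemma lcp_nil_right (u : List ℕ) : longestCommonPrefix u [] = [] := by
  cases u <;> rfl

lemma lcp_nil_left (u : List ℕ) : longestCommonPrefix [] u = [] := by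
  cases u <;> rfl

lemma getLastD_cons_of_ne_nil {t : List ℕ} (c d : ℕ) (ht : t ≠ []) :
    (c :: t).getLastD d = t.getLastD d := by
  cases t with
  | nil => exact absurd rfl ht
  | cons e t' => simp [List.getLastD_cons]

lemma eq_cons_of_head? {u : List ℕ} {c : ℕ} (h : u.head? = some c) :
    ∃ t, u = c :: t := by
  cases u with
  | nil => simp at h
  | cons d t => simp at h; exact ⟨t, by rw [h]⟩

end LCP

/-- Behaviour of the LCA under an effective union. -/
theorem ufaLca_ufaUnion (l : List ℕ) (h : ufaInvar l) (a b x y : ℕ)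
    (heff : effUnion l a b) (hx : x < l.length) (hy : y < l.length)
    (hrep : repOf (ufaUnion l a b) x = repOf (ufaUnion l a b) y) :
    ufaLca (ufaUnion l a b) x y =
      (if repOf l x = repOf l y then ufaLca l x y else repOf l b) := by
  obtain ⟨haf, hbf, hne⟩ := heff
  have ha : a < l.length := by
    rcases haf with ⟨y', hy'⟩ | ⟨y', hy'⟩
    · exact hy'.1
    · exact hy'.2.1
  have hb : b < l.length := by
    rcases hbf with ⟨y', hy'⟩ | ⟨y', hy'⟩
    · exact hy'.1
    · exact hy'.2.1
  set ra := repOf l a with hradef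
  set rb := repOf l b with hrbdef
  have hra : ra < l.length := repOf_lt h ha
  have hrb : rb < l.length := repOf_lt h hb
  have hroot_a : parentOf l ra = ra := repOf_isRoot h ha
  have hroot_b : parentOf l rb = rb := repOf_isRoot h hb
  have hU : ufaUnion l a b = l.set ra rb := rfl
  have hrepx := repOf_union h hra hroot_a hroot_b hne hx
  have hrepy := repOf_union h hra hroot_a hroot_b hne hy
  rw [hU] at hrep
  rw [hrepx, hrepy] at hrep
  have hwx := awalk_union h hra hroot_a hroot_b hne hx
  have hwy := awalk_union h hra hroot_a hroot_b hne hy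
  have hheadx : (awalkVertsAux l l.length x).head? = some (repOf l x) := awalk_head _ _
  have hheady : (awalkVertsAux l l.length y).head? = some (repOf l y) := awalk_head _ _
  unfold ufaLca awalkVertsFromRep
  rw [hU, hwx, hwy]
  by_cases hxy : repOf l x = repOf l y
  · rw [if_pos hxy]
    by_cases hxa : repOf l x = ra
    · have hya : repOf l y = ra := by rw [← hxy]; exact hxa
      rw [if_pos hxa, if_pos hya]
      obtain ⟨u0, hu⟩ := eq_cons_of_head? hheadx
      obtain ⟨v0, hv⟩ := eq_cons_of_head? hheady
      rw [hu, hv, hxa, hya]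
      simp only [List.singleton_append]
      rw [lcp_cons, lcp_cons]
      rw [getLastD_cons_of_ne_nil _ _ (by simp)]
    · have hya : repOf l y ≠ ra := by rw [← hxy]; exact hxa
      rw [if_neg hxa, if_neg hya]
      simp only [List.nil_append]
  · rw [if_neg hxy]
    by_cases hxa : repOf l x = ra
    · have hya : repOf l y ≠ ra := fun hh => hxy (by rw [hxa, hh])
      rw [if_pos hxa, if_neg hya] at hrep
      rw [if_pos hxa, if_neg hya]
      obtain ⟨u0, hu⟩ := eq_cons_of_head? hheadx
      obtain ⟨v0, hv⟩ := eq_cons_of_head? hheady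
      rw [hu, hv, hxa, ← hrep]
      simp only [List.singleton_append, List.nil_append]
      rw [lcp_cons]
      have hnil : longestCommonPrefix (ra :: u0) v0 = [] := by
        cases v0 with
        | nil => exact lcp_nil_right _
        | cons c v1 =>
          have hcmem : c ∈ awalkVertsAux l l.length y := by rw [hv]; simp
          obtain ⟨j, hj⟩ := awalk_mem hcmem
          have hrc : repOf l c = repOf l y := by rw [hj]; exact rep_iterate h hy j
          have hca : ra ≠ c := by
            intro hh
            exact hya (by rw [← hrc, ← hh, repOf_root_self hroot_a])
          exact lcp_cons_ne hca _ _
      rw [hnil]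
      rfl
    · by_cases hya : repOf l y = ra
      · rw [if_neg hxa, if_pos hya] at hrep
        rw [if_neg hxa, if_pos hya]
        obtain ⟨u0, hu⟩ := eq_cons_of_head? hheadx
        obtain ⟨v0, hv⟩ := eq_cons_of_head? hheady
        rw [hu, hv, hya, hrep]
        simp only [List.singleton_append, List.nil_append]
        rw [lcp_cons]
        have hnil : longestCommonPrefix u0 (ra :: v0) = [] := by
          cases u0 with
          | nil => exact lcp_nil_left _
          | cons c u1 =>
            have hcmem : c ∈ awalkVertsAux l l.length x := by rw [hu]; simp
            obtain ⟨j, hj⟩ := awalk_mem hcmem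
            have hrc : repOf l c = repOf l x := by rw [hj]; exact rep_iterate h hx j
            have hca : c ≠ ra := by
              intro hh
              exact hxa (by rw [← hrc, hh, repOf_root_self hroot_a])
            exact lcp_cons_ne hca _ _
        rw [hnil]
        rfl
      · rw [if_neg hxa, if_neg hya] at hrep
        exact absurd hrep hxy
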